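/- Let S and T be P-semigroups and let α : S → T be a monoid morphism preserving the relations (a ≺ b implies α(a) ≺ α(b)). Then for every path f in S, α ∘ f is a path in T, and the induced map τ(α) : τ(S) → τ(T), [f] ↦ [α ∘ f], is a well-defined Cu-morphism: it preserves addition, order, zero, the way-below relation, and suprema of increasing sequences. -/

import Mathlib

/-- The rationals in the open interval `(0,1)`, used as index set for paths. -/
abbrev Iq : Type := {q : ℚ // 0 < q ∧ q < 1}

lemma Iq.exists_gt (l : Iq) : ∃ m : Iq, l.1 < m.1 := by
  obtain ⟨h0, h1⟩ := l.2
  exact ⟨⟨(l.1 + 1) / 2, by constructor <;> linarith⟩, by show l.1 < (l.1 + 1) / 2; linarith⟩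

/-- The sequential way-below (compact containment) relation in a preordered set. -/
def CuWayBelow {S : Type*} [Preorder S] (x y : S) : Prop :=
  ∀ z : ℕ → S, Monotone z → ∀ s : S, IsLUB (Set.range z) s → y ≤ s → ∃ k, x ≤ z k

/-- A `P`-semigroup: a commutative monoid with an additive transitive relation. -/
structure PSgp (M : Type*) [AddCommMonoid M] where
  prec : M → M → Prop
  trans : ∀ ⦃a b c : M⦄, prec a b → prec b c → prec a c
  zero_prec : ∀ a : M, prec 0 a
  add_prec : ∀ ⦃a b c d : M⦄, prec a b → prec c d → prec (a + c) (b + d)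

namespace PSgp

variable {M : Type*} [AddCommMonoid M]

/-- A path in a `P`-semigroup, indexed by the rationals in `(0,1)`. -/
def IsPath (P : PSgp M) (f : Iq → M) : Prop :=
  ∀ ⦃l m : Iq⦄, l.1 < m.1 → P.prec (f l) (f m)

/-- The type of paths in a `P`-semigroup. -/
def Path (P : PSgp M) : Type _ := {f : Iq → M // P.IsPath f}

variable {P : PSgp M}

instance : Add P.Path :=
  ⟨fun f g => ⟨fun l => f.1 l + g.1 l, fun _ _ h => P.add_prec (f.2 h) (g.2 h)⟩⟩

instance : Zero P.Path := ⟨⟨fun _ => 0, fun _ _ _ => P.zero_prec 0⟩⟩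

lemma path_add_apply (f g : P.Path) (l : Iq) : (f + g).1 l = f.1 l + g.1 l := rfl

/-- The pre-order relation between paths. -/
def pLe (f g : P.Path) : Prop := ∀ l : Iq, ∃ m : Iq, P.prec (f.1 l) (g.1 m)

lemma pLe_refl (f : P.Path) : pLe f f := fun l => by
  obtain ⟨m, hm⟩ := Iq.exists_gt l
  exact ⟨m, f.2 hm⟩

lemma pLe_trans {f g h : P.Path} (h1 : pLe f g) (h2 : pLe g h) : pLe f h := fun l => by
  obtain ⟨m, hm⟩ := h1 l
  obtain ⟨m', hm'⟩ := h2 m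
  exact ⟨m', P.trans hm hm'⟩

lemma pLe_add {f g f' g' : P.Path} (h1 : pLe f f') (h2 : pLe g g') : pLe (f + g) (f' + g') := by
  intro l
  obtain ⟨m1, hm1⟩ := h1 l
  obtain ⟨m2, hm2⟩ := h2 l
  have hmem : 0 < max m1.1 m2.1 ∧ max m1.1 m2.1 < 1 :=
    ⟨lt_max_of_lt_left m1.2.1, max_lt m1.2.2 m2.2.2⟩
  obtain ⟨μ, hμ⟩ := Iq.exists_gt ⟨max m1.1 m2.1, hmem⟩
  have e1 : m1.1 < μ.1 := lt_of_le_of_lt (le_max_left _ _) hμ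
  have e2 : m2.1 < μ.1 := lt_of_le_of_lt (le_max_right _ _) hμ
  exact ⟨μ, P.add_prec (P.trans hm1 (f'.2 e1)) (P.trans hm2 (g'.2 e2))⟩

instance pathSetoid (P : PSgp M) : Setoid P.Path where
  r f g := pLe f g ∧ pLe g f
  iseqv := ⟨fun f => ⟨pLe_refl f, pLe_refl f⟩, fun h => ⟨h.2, h.1⟩,
    fun h1 h2 => ⟨pLe_trans h1.1 h2.1, pLe_trans h2.2 h1.2⟩⟩

/-- The path construction `τ(S)`: equivalence classes of paths. -/
abbrev Tau (P : PSgp M) : Type _ := Quotient (pathSetoid P)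

def addT : Tau P → Tau P → Tau P :=
  Quotient.map₂ (· + ·) fun _ _ hf _ _ hg => ⟨pLe_add hf.1 hg.1, pLe_add hf.2 hg.2⟩

lemma addT_mk (f g : P.Path) : addT ⟦f⟧ ⟦g⟧ = ⟦f + g⟧ := rfl

lemma path_add_assoc (f g h : P.Path) : f + g + h = f + (g + h) :=
  Subtype.ext (funext fun _ => add_assoc _ _ _)

lemma path_add_comm (f g : P.Path) : f + g = g + f :=
  Subtype.ext (funext fun _ => add_comm _ _)

lemma path_zero_add (f : P.Path) : 0 + f = f :=
  Subtype.ext (funext fun _ => zero_add _)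

lemma path_add_zero (f : P.Path) : f + 0 = f :=
  Subtype.ext (funext fun _ => add_zero _)

instance : Zero (Tau P) := ⟨⟦(0 : P.Path)⟧⟩
instance : Add (Tau P) := ⟨addT⟩

instance : AddCommMonoid (Tau P) where
  add := addT
  zero := ⟦(0 : P.Path)⟧
  add_assoc a b c := Quotient.inductionOn₃ a b c fun f g h => by
    show addT (addT ⟦f⟧ ⟦g⟧) ⟦h⟧ = addT ⟦f⟧ (addT ⟦g⟧ ⟦h⟧)
    rw [addT_mk, addT_mk, addT_mk, addT_mk, path_add_assoc]
  zero_add a := Quotient.inductionOn a fun f => by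
    show addT ⟦(0 : P.Path)⟧ ⟦f⟧ = ⟦f⟧
    rw [addT_mk, path_zero_add]
  add_zero a := Quotient.inductionOn a fun f => by
    show addT ⟦f⟧ ⟦(0 : P.Path)⟧ = ⟦f⟧
    rw [addT_mk, path_add_zero]
  add_comm a b := Quotient.inductionOn₂ a b fun f g => by
    show addT ⟦f⟧ ⟦g⟧ = addT ⟦g⟧ ⟦f⟧
    rw [addT_mk, addT_mk, path_add_comm]
  nsmul := nsmulRec
  nsmul_zero := fun _ => rfl
  nsmul_succ := fun _ _ => rfl

def leT : Tau P → Tau P → Prop :=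
  Quotient.lift₂ pLe fun _ _ _ _ hf hg => propext
    ⟨fun h => pLe_trans hf.2 (pLe_trans h hg.1), fun h => pLe_trans hf.1 (pLe_trans h hg.2)⟩

instance : PartialOrder (Tau P) where
  le := leT
  le_refl a := Quotient.inductionOn a pLe_refl
  le_trans a b c := Quotient.inductionOn₃ a b c fun _ _ _ h1 h2 => pLe_trans h1 h2
  le_antisymm a b := Quotient.inductionOn₂ a b fun _ _ h1 h2 => Quotient.sound ⟨h1, h2⟩

lemma leT_mk (f g : P.Path) : (⟦f⟧ : Tau P) ≤ ⟦g⟧ ↔ pLe f g := Iff.rfl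

end PSgp

/-!
The map `[f] ↦ [α ∘ f]` is well defined, additive and monotone because `α` preserves `≺`.
An increasing sequence of paths `f n` has a supremum path `K`: the values `f n u` form a countable
family directed under `≺`, so they can be chained into a single `≺`-increasing sequence that
eventually dominates each of them, and `K` runs through this chain block by block on `(0,1)`.
Every value of `K` is `≺`-below a value of some `f n`; this property makes `[K]` the supremum of
the `[f n]` and is preserved by `α`, so `τ(α)` preserves suprema.
For the way-below relation, `[g]` is the supremum of its rescalings `t ↦ g (c t)` as `c → 1`, so
`x ≪ [g]` gives `x ≤ [g (c ·)]`, and a path lying `≺`-below the single value `g c` is way below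
`[g]`, a property that `α` again preserves.
-/

namespace Iq

instance : Inhabited Iq := ⟨⟨1 / 2, by norm_num⟩⟩

def mid (u : Iq) : Iq := ⟨(u.1 + 1) / 2, by obtain ⟨h0, h1⟩ := u.2; constructor <;> linarith⟩

lemma lt_mid (u : Iq) : u.1 < (mid u).1 := by
  show u.1 < (u.1 + 1) / 2
  linarith [u.2.2]

def lerp (a b s : Iq) : Iq :=
  ⟨a.1 + (b.1 - a.1) * s.1, by
    obtain ⟨⟨a0, a1⟩, ⟨b0, b1⟩, ⟨s0, s1⟩⟩ := And.intro a.2 (And.intro b.2 s.2)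
    constructor
    · nlinarith [mul_pos a0 (sub_pos.2 s1), mul_pos b0 s0]
    · nlinarith [mul_pos (sub_pos.2 a1) (sub_pos.2 s1), mul_pos (sub_pos.2 b1) s0]⟩

variable {a b s s' : Iq}

lemma lt_lerp (h : a.1 < b.1) : a.1 < (lerp a b s).1 := by
  show a.1 < a.1 + (b.1 - a.1) * s.1
  nlinarith [s.2.1]

lemma lerp_lt (h : a.1 < b.1) : (lerp a b s).1 < b.1 := by
  show a.1 + (b.1 - a.1) * s.1 < b.1
  nlinarith [s.2.2]

lemma lerp_lt_lerp (h : a.1 < b.1) (hs : s.1 < s'.1) : (lerp a b s).1 < (lerp a b s').1 := by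
  show a.1 + (b.1 - a.1) * s.1 < a.1 + (b.1 - a.1) * s'.1
  nlinarith

def odds (t : Iq) : ℚ := t.1 / (1 - t.1)

lemma odds_nonneg (t : Iq) : 0 ≤ odds t :=
  div_nonneg t.2.1.le (sub_pos.2 t.2.2).le

lemma odds_lt_odds {t t' : Iq} (h : t.1 < t'.1) : odds t < odds t' := by
  rw [odds, odds, div_lt_div_iff₀ (sub_pos.2 t.2.2) (sub_pos.2 t'.2.2)]
  nlinarith

/-- `Iq` is cut into the blocks `odds ⁻¹' [j, j + 1)`, `j : ℕ`, each order-isomorphic to `[1/2, 1)`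
via `blockPos`; supremum paths are glued together from these blocks. -/
def blockIdx (t : Iq) : ℕ := ⌊odds t⌋₊

def blockPos (t : Iq) : Iq :=
  ⟨(1 + (odds t - blockIdx t)) / 2, by
    have h0 := Nat.floor_le (odds_nonneg t)
    have h1 := Nat.lt_floor_add_one (odds t)
    rw [blockIdx]
    constructor <;> linarith⟩

lemma blockIdx_mono {t t' : Iq} (h : t.1 < t'.1) : blockIdx t ≤ blockIdx t' :=
  Nat.floor_mono (odds_lt_odds h).le

lemma blockPos_lt_blockPos {t t' : Iq} (h : t.1 < t'.1) (hj : blockIdx t = blockIdx t') :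
    (blockPos t).1 < (blockPos t').1 := by
  show (1 + (odds t - blockIdx t)) / 2 < (1 + (odds t' - blockIdx t')) / 2
  rw [hj]
  linarith [odds_lt_odds h]

lemma exists_blockIdx_eq (j : ℕ) : ∃ t : Iq, blockIdx t = j := by
  have hj : (0 : ℚ) < 2 * j + 3 := by positivity
  have hmem : (0 : ℚ) < (2 * j + 1) / (2 * j + 3) ∧ (2 * j + 1) / (2 * j + 3) < (1 : ℚ) :=
    ⟨by positivity, by rw [div_lt_one hj]; linarith⟩
  refine ⟨⟨_, hmem⟩, ?_⟩
  have hodds : odds ⟨_, hmem⟩ = j + 1 / 2 := by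
    rw [odds]
    field_simp
    ring
  rw [blockIdx, hodds, Nat.floor_eq_iff (by positivity)]
  constructor <;> linarith

def toOne (n : ℕ) : Iq :=
  ⟨(n + 1) / (n + 2), by
    have hn : (0 : ℚ) < n + 2 := by positivity
    constructor
    · positivity
    · rw [div_lt_one hn]; linarith⟩

lemma toOne_mono : Monotone fun n => (toOne n).1 := by
  intro n n' h
  have h' : (n : ℚ) ≤ n' := by exact_mod_cast h
  show ((n : ℚ) + 1) / (n + 2) ≤ ((n' : ℚ) + 1) / (n' + 2)
  rw [div_le_div_iff₀ (by positivity) (by positivity)]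
  linarith

lemma exists_lt_toOne (l : Iq) : ∃ n, l.1 < (toOne n).1 := by
  obtain ⟨n, hn⟩ := exists_nat_gt (1 - l.1)⁻¹
  have hl : 0 < 1 - l.1 := sub_pos.2 l.2.2
  refine ⟨n, ?_⟩
  show l.1 < (n + 1) / (n + 2)
  rw [lt_div_iff₀ (by positivity)]
  rw [inv_lt_iff_one_lt_mul₀ hl] at hn
  nlinarith [l.2.1]

end Iq

lemma CuWayBelow.mono_left {S : Type*} [Preorder S] {x x' y : S} (hx : x' ≤ x)
    (h : CuWayBelow x y) : CuWayBelow x' y :=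
  fun z hz s hs hy => (h z hz s hs hy).imp fun _ hk => le_trans hx hk

namespace PSgp

variable {M : Type*} [AddCommMonoid M] {P : PSgp M}

def Path.rescale (g : P.Path) (c : Iq) : P.Path :=
  ⟨fun t => g.1 ⟨c.1 * t.1, mul_pos c.2.1 t.2.1, by nlinarith [c.2.2, t.2.1, t.2.2]⟩,
    fun _ _ h => g.2 (mul_lt_mul_of_pos_left h c.2.1)⟩

lemma Path.rescale_apply_prec (g : P.Path) (c l : Iq) : P.prec ((g.rescale c).1 l) (g.1 c) :=
  g.2 (mul_lt_of_lt_one_right c.2.1 l.2.2)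

lemma Path.pLe_rescale_rescale (g : P.Path) {c c' : Iq} (h : c.1 ≤ c'.1) :
    pLe (g.rescale c) (g.rescale c') := fun l =>
  ⟨Iq.mid l, g.2 (mul_lt_mul_of_le_of_lt_of_nonneg_of_pos h (Iq.lt_mid l) l.2.1.le c'.2.1)⟩

lemma Path.isLUB_rescale_toOne (g : P.Path) :
    IsLUB (Set.range fun n => (⟦g.rescale (Iq.toOne n)⟧ : Tau P)) ⟦g⟧ := by
  refine ⟨?_, fun b hb => ?_⟩
  · rintro _ ⟨n, rfl⟩
    exact fun l => ⟨Iq.mid _, g.2 (Iq.lt_mid _)⟩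
  · induction b using Quotient.inductionOn with | h k =>
    intro l
    obtain ⟨n, hn⟩ := Iq.exists_lt_toOne l
    set c := Iq.toOne n
    let t : Iq := ⟨l.1 / c.1, div_pos l.2.1 c.2.1, (div_lt_one c.2.1).2 hn⟩
    have hlt : l.1 < c.1 * (Iq.mid t).1 := by
      calc l.1 = c.1 * t.1 := (mul_div_cancel₀ _ c.2.1.ne').symm
        _ < c.1 * (Iq.mid t).1 := mul_lt_mul_of_pos_left (Iq.lt_mid t) c.2.1
    obtain ⟨m, hm⟩ := (hb ⟨n, rfl⟩ : pLe (g.rescale c) k) (Iq.mid t)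
    exact ⟨m, P.trans (g.2 hlt) hm⟩

lemma exists_le_rescale_of_cuWayBelow {x : Tau P} {g : P.Path} (h : CuWayBelow x ⟦g⟧) :
    ∃ c : Iq, x ≤ ⟦g.rescale c⟧ := by
  obtain ⟨n, hn⟩ := h _ (fun _ _ hn => g.pLe_rescale_rescale (Iq.toOne_mono hn)) _
    g.isLUB_rescale_toOne le_rfl
  exact ⟨_, hn⟩

def IsSupPath (f : ℕ → P.Path) (K : P.Path) : Prop :=
  (∀ n, pLe (f n) K) ∧ ∀ l, ∃ n m, P.prec (K.1 l) ((f n).1 m)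

lemma IsSupPath.isLUB {f : ℕ → P.Path} {K : P.Path} (hK : IsSupPath f K) :
    IsLUB (Set.range fun n => (⟦f n⟧ : Tau P)) ⟦K⟧ := by
  refine ⟨?_, fun b hb => ?_⟩
  · rintro _ ⟨n, rfl⟩
    exact hK.1 n
  · induction b using Quotient.inductionOn with | h k =>
    intro l
    obtain ⟨n, m, hm⟩ := hK.2 l
    obtain ⟨m', hm'⟩ := (hb ⟨n, rfl⟩ : pLe (f n) k) m
    exact ⟨m', P.trans hm hm'⟩

section SupPath

variable {f : ℕ → P.Path}

/-- The relation along which the points `(n, u)`, standing for the values `f n u`, are chained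
in the construction of a supremum path; passing through `Iq.mid` leaves room to interpolate. -/
def MidPrec (f : ℕ → P.Path) (p q : ℕ × Iq) : Prop :=
  P.prec ((f p.1).1 (Iq.mid p.2)) ((f q.1).1 q.2)

lemma directed_midPrec (hf : Monotone fun n => (⟦f n⟧ : Tau P)) : Directed (MidPrec f) id := by
  rintro ⟨a, x⟩ ⟨b, y⟩
  obtain ⟨x', hx⟩ := (hf (le_max_left a b) : pLe (f a) (f (max a b))) (Iq.mid x)
  obtain ⟨y', hy⟩ := (hf (le_max_right a b) : pLe (f b) (f (max a b))) (Iq.mid y)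
  obtain ⟨u, hu⟩ := Iq.exists_gt
    ⟨max x'.1 y'.1, lt_max_of_lt_left x'.2.1, max_lt x'.2.2 y'.2.2⟩
  exact ⟨(max a b, u), P.trans hx ((f _).2 ((le_max_left _ _).trans_lt hu)),
    P.trans hy ((f _).2 ((le_max_right _ _).trans_lt hu))⟩

noncomputable def supChain (hf : Monotone fun n => (⟦f n⟧ : Tau P)) : ℕ → ℕ × Iq :=
  (directed_midPrec hf).sequence id

lemma midPrec_supChain (hf : Monotone fun n => (⟦f n⟧ : Tau P)) {i j : ℕ} (hij : i < j) :
    MidPrec f (supChain hf i) (supChain hf j) := by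
  induction j, hij using Nat.le_induction with
  | base => exact (directed_midPrec hf).sequence_mono_nat i
  | succ j _ ih =>
    exact P.trans ih (P.trans ((f _).2 (Iq.lt_mid _)) ((directed_midPrec hf).sequence_mono_nat j))

def blockValue (f : ℕ → P.Path) (p : ℕ × Iq) (s : Iq) : M :=
  (f p.1).1 (Iq.lerp p.2 (Iq.mid p.2) s)

lemma blockValue_prec_blockValue (f : ℕ → P.Path) (p : ℕ × Iq) {s s' : Iq} (h : s.1 < s'.1) :
    P.prec (blockValue f p s) (blockValue f p s') :=
  (f _).2 (Iq.lerp_lt_lerp (Iq.lt_mid _) h)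

lemma prec_blockValue (f : ℕ → P.Path) (p : ℕ × Iq) (s : Iq) :
    P.prec ((f p.1).1 p.2) (blockValue f p s) :=
  (f _).2 (Iq.lt_lerp (Iq.lt_mid _))

lemma blockValue_prec (f : ℕ → P.Path) (p : ℕ × Iq) (s : Iq) :
    P.prec (blockValue f p s) ((f p.1).1 (Iq.mid p.2)) :=
  (f _).2 (Iq.lerp_lt (Iq.lt_mid _))

/-- On the `j`-th block of `Iq`, the supremum path runs through `f n` between `u` and `Iq.mid u`,
where `(n, u)` is the `j`-th point of `supChain`. -/
noncomputable def supPath (hf : Monotone fun n => (⟦f n⟧ : Tau P)) : P.Path :=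
  ⟨fun t => blockValue f (supChain hf (Iq.blockIdx t)) (Iq.blockPos t), by
    intro t t' htt'
    rcases (Iq.blockIdx_mono htt').lt_or_eq with hlt | heq
    · exact P.trans (blockValue_prec f _ _)
        (P.trans (midPrec_supChain hf hlt) (prec_blockValue f _ _))
    · show P.prec (blockValue f (supChain hf (Iq.blockIdx t)) _) _
      rw [heq]
      exact blockValue_prec_blockValue f _ (Iq.blockPos_lt_blockPos htt' heq)⟩

lemma supPath_apply (hf : Monotone fun n => (⟦f n⟧ : Tau P)) (t : Iq) :
    (supPath hf).1 t = blockValue f (supChain hf (Iq.blockIdx t)) (Iq.blockPos t) := rfl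

lemma isSupPath_supPath (hf : Monotone fun n => (⟦f n⟧ : Tau P)) :
    IsSupPath f (supPath hf) := by
  refine ⟨fun n l => ?_, fun t => ?_⟩
  · obtain ⟨t, ht⟩ := Iq.exists_blockIdx_eq (Encodable.encode (n, l) + 1)
    have hchain : MidPrec f (n, l) (supChain hf (Iq.blockIdx t)) := by
      rw [ht]
      exact (directed_midPrec hf).rel_sequence (n, l)
    refine ⟨t, P.trans ((f n).2 (Iq.lt_mid l)) ?_⟩
    rw [supPath_apply]
    exact P.trans hchain (prec_blockValue f _ _)
  · obtain ⟨m, hm⟩ := Iq.exists_gt (Iq.lerp (supChain hf (Iq.blockIdx t)).2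
      (Iq.mid (supChain hf (Iq.blockIdx t)).2) (Iq.blockPos t))
    exact ⟨_, m, (f _).2 hm⟩

end SupPath

lemma exists_isSupPath {z : ℕ → Tau P} (hz : Monotone z) :
    ∃ (f : ℕ → P.Path) (K : P.Path), (∀ n, ⟦f n⟧ = z n) ∧ IsSupPath f K := by
  have hf : Monotone fun n => (⟦(z n).out⟧ : Tau P) := by
    simpa only [Quotient.out_eq] using hz
  exact ⟨_, supPath hf, fun n => Quotient.out_eq (z n), isSupPath_supPath hf⟩

lemma cuWayBelow_of_forall_prec {f g : P.Path} {t : Iq} (hfg : ∀ l, P.prec (f.1 l) (g.1 t)) :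
    CuWayBelow (⟦f⟧ : Tau P) ⟦g⟧ := by
  intro z hz s hs hgs
  obtain ⟨F, K, hF, hK⟩ := exists_isSupPath hz
  have hsK : s ≤ ⟦K⟧ := hs.2 (by simpa only [hF] using hK.isLUB.1)
  obtain ⟨m, hm⟩ := (le_trans hgs hsK : pLe g K) t
  obtain ⟨n, m', hm'⟩ := hK.2 m
  refine ⟨n, ?_⟩
  rw [← hF n]
  exact fun l => ⟨m', P.trans (hfg l) (P.trans hm hm')⟩

section Map

variable {N : Type*} [AddCommMonoid N] {Q : PSgp N} (α : M → N)
  (hα : ∀ ⦃a b : M⦄, P.prec a b → Q.prec (α a) (α b))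

def mapPath (f : P.Path) : Q.Path := ⟨α ∘ f.1, fun _ _ h => hα (f.2 h)⟩

variable {α hα}

lemma pLe_mapPath {f g : P.Path} (h : pLe f g) : pLe (mapPath α hα f) (mapPath α hα g) :=
  fun l => (h l).imp fun _ hm => hα hm

lemma IsSupPath.mapPath {f : ℕ → P.Path} {K : P.Path} (hK : IsSupPath f K) :
    IsSupPath (fun n => mapPath α hα (f n)) (mapPath α hα K) :=
  ⟨fun n => pLe_mapPath (hK.1 n), fun l => (hK.2 l).imp fun _ => Exists.imp fun _ hm => hα hm⟩

variable (α hα)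

def tauMap : Tau P → Tau Q :=
  Quotient.map (mapPath α hα) fun _ _ h => ⟨pLe_mapPath h.1, pLe_mapPath h.2⟩

lemma tauMap_mk (f : P.Path) : tauMap α hα ⟦f⟧ = ⟦mapPath α hα f⟧ := rfl

variable {α hα}

lemma tauMap_monotone : Monotone (tauMap α hα) := by
  intro x y
  induction x using Quotient.inductionOn
  induction y using Quotient.inductionOn
  exact pLe_mapPath

lemma tauMap_zero (h0 : α 0 = 0) : tauMap α hα 0 = 0 :=
  congrArg (Quotient.mk _) (Subtype.ext (funext fun _ => h0))

lemma tauMap_add (hadd : ∀ a b, α (a + b) = α a + α b) (x y : Tau P) :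
    tauMap α hα (x + y) = tauMap α hα x + tauMap α hα y := by
  induction x using Quotient.inductionOn with | h f =>
  induction y using Quotient.inductionOn with | h g =>
  exact congrArg (Quotient.mk _) (Subtype.ext (funext fun l => hadd (f.1 l) (g.1 l)))

lemma tauMap_isLUB {z : ℕ → Tau P} {s : Tau P} (hz : Monotone z) (hs : IsLUB (Set.range z) s) :
    IsLUB (Set.range fun n => tauMap α hα (z n)) (tauMap α hα s) := by
  obtain ⟨f, K, hf, hK⟩ := exists_isSupPath hz
  have hsK : s = ⟦K⟧ := hs.unique (by simpa only [hf] using hK.isLUB)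
  simpa only [hsK, ← hf, tauMap_mk] using hK.mapPath.isLUB

lemma tauMap_cuWayBelow {x y : Tau P} (hxy : CuWayBelow x y) :
    CuWayBelow (tauMap α hα x) (tauMap α hα y) := by
  induction y using Quotient.inductionOn with | h g =>
  obtain ⟨c, hc⟩ := exists_le_rescale_of_cuWayBelow hxy
  exact (cuWayBelow_of_forall_prec fun l => hα (g.rescale_apply_prec c l)).mono_left
    (tauMap_monotone hc)

end Map

end PSgp

/-- A relation-preserving monoid morphism `α : S → T` of `P`-semigroups sends paths to
paths, and induces a well-defined Cu-morphism `τ(α) : τ(S) → τ(T)`, `[f] ↦ [α ∘ f]`,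
preserving addition, zero, order, the way-below relation and suprema of increasing
sequences. -/
theorem stmt10 {M N : Type*} [AddCommMonoid M] [AddCommMonoid N]
    (P : PSgp M) (Q : PSgp N) (α : M → N)
    (hzero : α 0 = 0) (hadd : ∀ a b : M, α (a + b) = α a + α b)
    (hrel : ∀ ⦃a b : M⦄, P.prec a b → Q.prec (α a) (α b)) :
    (∀ f : P.Path, Q.IsPath (α ∘ f.1)) ∧
    ∃ T : PSgp.Tau P → PSgp.Tau Q,
      (∀ (f : P.Path) (g : Q.Path), (∀ l : Iq, g.1 l = α (f.1 l)) → T ⟦f⟧ = ⟦g⟧) ∧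
      T 0 = 0 ∧
      (∀ x y : PSgp.Tau P, T (x + y) = T x + T y) ∧
      Monotone T ∧
      (∀ x y : PSgp.Tau P, CuWayBelow x y → CuWayBelow (T x) (T y)) ∧
      (∀ (z : ℕ → PSgp.Tau P) (s : PSgp.Tau P), Monotone z → IsLUB (Set.range z) s →
        IsLUB (Set.range fun n => T (z n)) (T s)) := by
  refine ⟨fun f => (PSgp.mapPath α hrel f).2, PSgp.tauMap α hrel, fun f g hfg => ?_,
    PSgp.tauMap_zero hzero, PSgp.tauMap_add hadd, PSgp.tauMap_monotone,
    fun _ _ => PSgp.tauMap_cuWayBelow, fun _ _ => PSgp.tauMap_isLUB⟩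
  rw [PSgp.tauMap_mk]
  exact congrArg (Quotient.mk _) (Subtype.ext (funext fun l => (hfg l).symm))
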